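/- arXiv:2210.14130 — 7 statements merged into one kernel-verified Lean document; each statement's English description precedes it below -/
import Mathlib

section
/- Let d be a natural number and let b_0, b_1, …, b_d be nonnegative real numbers such that p(ϑ) = Σ_{j=0}^{d} b_j cos(jϑ) ≥ 0 for every real ϑ. Then for every real x > 1 and every real y, Σ_{j=0}^{d} b_j · ( −Re( ζ'(x+ijy) / ζ(x+ijy) ) ) ≥ 0. -/
open ArithmeticFunction Complex

/-- Let `b_0, …, b_d` be nonnegative reals with
`Σ_{j=0}^d b_j cos(jϑ) ≥ 0` for all real `ϑ`.  Then for every real `x > 1` and every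
real `y`, `Σ_{j=0}^d b_j (−Re(ζ'(x+ijy)/ζ(x+ijy))) ≥ 0`. -/
theorem stmt_3 (d : ℕ) (b : ℕ → ℝ) (hb : ∀ j ≤ d, 0 ≤ b j)
    (hp : ∀ ϑ : ℝ, 0 ≤ ∑ j ∈ Finset.range (d + 1), b j * Real.cos (j * ϑ))
    (x y : ℝ) (hx : 1 < x) :
    0 ≤ ∑ j ∈ Finset.range (d + 1),
      b j * (-(deriv riemannZeta (x + Complex.I * j * y) /
          riemannZeta (x + Complex.I * j * y)).re) := by
  have hs : ∀ j : ℕ, 1 < (x + Complex.I * (j : ℂ) * (y : ℂ)).re := by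
    intro j; simpa using hx
  have hsum : ∀ j : ℕ, Summable fun n : ℕ =>
      (LSeries.term (fun n => (Λ n : ℂ)) (x + Complex.I * j * y) n).re :=
    fun j => ⟨_, Complex.hasSum_re (LSeriesSummable_vonMangoldt (hs j)).hasSum⟩
  have key : ∀ j : ℕ, b j * (-(deriv riemannZeta (x + Complex.I * j * y) /
      riemannZeta (x + Complex.I * j * y)).re)
      = ∑' n : ℕ, b j * (LSeries.term (fun n => (Λ n : ℂ)) (x + Complex.I * j * y) n).re := by
    intro j
    rw [tsum_mul_left]
    congr 1
    rw [← neg_re, ← neg_div, ← LSeries_vonMangoldt_eq_deriv_riemannZeta_div (hs j)]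
    exact Complex.re_tsum (LSeriesSummable_vonMangoldt (hs j))
  rw [Finset.sum_congr rfl fun j _ => key j,
    ← Summable.tsum_finsetSum (fun j _ => ((hsum j).mul_left (b j)))]
  refine tsum_nonneg fun n => ?_
  rcases eq_or_ne n 0 with rfl | hn
  · simp [LSeries.term]
  · have hterm : ∀ j : ℕ, (LSeries.term (fun n => (Λ n : ℂ)) (x + Complex.I * j * y) n).re
        = Λ n * Real.exp (-(Real.log n * x)) * Real.cos ((j : ℝ) * (y * Real.log n)) := by
      intro j
      rw [LSeries.term_of_ne_zero hn]
      have hn0 : (n : ℂ) ≠ 0 := Nat.cast_ne_zero.mpr hn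
      rw [Complex.cpow_def_of_ne_zero hn0, ← Complex.natCast_log, div_eq_mul_inv,
        ← Complex.exp_neg, Complex.re_ofReal_mul, Complex.exp_re]
      have hlr : (Complex.log (n : ℂ)).re = Real.log n := by
        rw [← Complex.natCast_log, Complex.ofReal_re]
      have hli : (Complex.log (n : ℂ)).im = 0 := by
        rw [← Complex.natCast_log, Complex.ofReal_im]
      have hre : (-((Real.log n : ℂ) * (x + Complex.I * j * y))).re = -(Real.log n * x) := by
        simp [hlr, hli]
      have him : (-((Real.log n : ℂ) * (x + Complex.I * j * y))).im
          = -((j : ℝ) * (y * Real.log n)) := by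
        simp [hlr, hli]; ring
      rw [hre, him, Real.cos_neg, mul_assoc]
    calc (0:ℝ) ≤ (Λ n * Real.exp (-(Real.log n * x))) *
          ∑ j ∈ Finset.range (d + 1), b j * Real.cos ((j : ℝ) * (y * Real.log n)) :=
        mul_nonneg (mul_nonneg vonMangoldt_nonneg (Real.exp_nonneg _)) (hp _)
      _ = ∑ j ∈ Finset.range (d + 1),
          b j * (LSeries.term (fun n => (Λ n : ℂ)) (x + Complex.I * j * y) n).re := by
        rw [Finset.mul_sum]
        exact Finset.sum_congr rfl fun j _ => by rw [hterm j]; ring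
end

section
/- The function u ↦ −ζ'(u)/ζ(u) is strictly convex on the real interval (1, ∞). -/
open ArithmeticFunction LSeries

private lemma summable_vm {u : ℝ} (hu : 1 < u) :
    Summable (fun n : ℕ => Λ n / (n : ℝ) ^ u) := by
  have h : LSeriesSummable (fun n : ℕ => (Λ n : ℂ)) (u : ℂ) :=
    LSeriesSummable_vonMangoldt (by simp [hu])
  have := (Complex.reCLM : ℂ →L[ℝ] ℝ).summable h
  refine this.congr fun n => ?_
  rcases eq_or_ne n 0 with rfl | hn
  · simp [LSeries.term]
  · simp only [Function.comp, LSeries.term_of_ne_zero hn, Complex.reCLM_apply]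
    rw [← Complex.ofReal_natCast n, ← Complex.ofReal_cpow (Nat.cast_nonneg n),
      ← Complex.ofReal_div, Complex.ofReal_re]

private lemma key_eq {u : ℝ} (hu : 1 < u) :
    -(deriv riemannZeta (u : ℂ) / riemannZeta (u : ℂ)).re
      = ∑' n : ℕ, Λ n / (n : ℝ) ^ u := by
  have h : LSeries (fun n : ℕ => (Λ n : ℂ)) (u : ℂ)
      = - deriv riemannZeta (u : ℂ) / riemannZeta (u : ℂ) :=
    LSeries_vonMangoldt_eq_deriv_riemannZeta_div (by simp [hu])
  have h2 : -(deriv riemannZeta (u : ℂ) / riemannZeta (u : ℂ)).re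
      = (LSeries (fun n : ℕ => (Λ n : ℂ)) (u : ℂ)).re := by
    rw [h, neg_div, Complex.neg_re]
  rw [h2, LSeries, Complex.re_tsum (LSeriesSummable_vonMangoldt (by simp [hu]))]
  refine tsum_congr fun n => ?_
  rcases eq_or_ne n 0 with rfl | hn
  · simp [LSeries.term]
  · simp only [LSeries.term_of_ne_zero hn]
    rw [← Complex.ofReal_natCast n, ← Complex.ofReal_cpow (Nat.cast_nonneg n),
      ← Complex.ofReal_div, Complex.ofReal_re]

private lemma term_convex {n : ℕ} {x y a b : ℝ} (ha : 0 < a) (hb : 0 < b)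
    (hab : a + b = 1) :
    Λ n / (n : ℝ) ^ (a * x + b * y) ≤ a * (Λ n / (n : ℝ) ^ x) + b * (Λ n / (n : ℝ) ^ y) := by
  rcases eq_or_ne n 0 with rfl | hn
  · simp
  · have hn0 : (0 : ℝ) < n := by positivity
    have hinv : ∀ u : ℝ, ((n : ℝ) ^ u)⁻¹ = Real.exp (-(Real.log n) * u) := fun u => by
      rw [Real.rpow_def_of_pos hn0 u, ← Real.exp_neg, neg_mul]
    have hexp := convexOn_exp.2 (Set.mem_univ (-(Real.log n) * x))
      (Set.mem_univ (-(Real.log n) * y)) ha.le hb.le hab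
    simp only [smul_eq_mul] at hexp
    have harg : -(Real.log n) * (a * x + b * y)
        = a * (-(Real.log n) * x) + b * (-(Real.log n) * y) := by ring
    have hΛ : 0 ≤ Λ n := ArithmeticFunction.vonMangoldt_nonneg
    calc Λ n / (n : ℝ) ^ (a * x + b * y)
        = Λ n * Real.exp (-(Real.log n) * (a * x + b * y)) := by
          rw [div_eq_mul_inv, hinv]
      _ ≤ Λ n * (a * Real.exp (-(Real.log n) * x) + b * Real.exp (-(Real.log n) * y)) := by
          rw [harg]; exact mul_le_mul_of_nonneg_left hexp hΛ
      _ = a * (Λ n / (n : ℝ) ^ x) + b * (Λ n / (n : ℝ) ^ y) := by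
          rw [div_eq_mul_inv, div_eq_mul_inv, hinv, hinv]; ring

/-- The function `u ↦ −ζ'(u)/ζ(u)` is strictly convex on the real
interval `(1, ∞)`.  (For real arguments `> 1` the values of `ζ` and `ζ'` are real,
so we take real parts.) -/
theorem stmt_8 :
    StrictConvexOn ℝ (Set.Ioi (1 : ℝ))
      (fun u : ℝ => -(deriv riemannZeta (u : ℂ) / riemannZeta (u : ℂ)).re) := by
  refine ⟨convex_Ioi 1, fun x hx y hy hxy a b ha hb hab => ?_⟩
  simp only [smul_eq_mul]
  have hx' : 1 < x := hx
  have hy' : 1 < y := hy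
  have hmid : 1 < a * x + b * y := by nlinarith
  rw [key_eq hx', key_eq hy', key_eq hmid]
  have hsx := summable_vm hx'
  have hsy := summable_vm hy'
  have hg : Summable (fun n : ℕ => a * (Λ n / (n : ℝ) ^ x) + b * (Λ n / (n : ℝ) ^ y)) :=
    (hsx.mul_left a).add (hsy.mul_left b)
  have hlt : Λ (2 : ℕ) / ((2 : ℕ) : ℝ) ^ (a * x + b * y)
      < a * (Λ (2 : ℕ) / ((2 : ℕ) : ℝ) ^ x) + b * (Λ (2 : ℕ) / ((2 : ℕ) : ℝ) ^ y) := by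
    have hΛ2 : Λ (2 : ℕ) = Real.log 2 := ArithmeticFunction.vonMangoldt_apply_prime Nat.prime_two
    have hlog : (0 : ℝ) < Real.log 2 := Real.log_pos one_lt_two
    have hc : (((2 : ℕ) : ℝ)) = (2 : ℝ) := by norm_num
    have hinv : ∀ u : ℝ, ((2 : ℝ) ^ u)⁻¹ = Real.exp (-(Real.log 2) * u) := fun u => by
      rw [Real.rpow_def_of_pos (by norm_num) u, ← Real.exp_neg, neg_mul]
    have hne : -(Real.log 2) * x ≠ -(Real.log 2) * y := fun h =>
      hxy (mul_left_cancel₀ (neg_ne_zero.mpr hlog.ne') h)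
    have hexp := strictConvexOn_exp.2 (Set.mem_univ (-(Real.log 2) * x))
      (Set.mem_univ (-(Real.log 2) * y)) hne ha hb hab
    simp only [smul_eq_mul] at hexp
    have harg : -(Real.log 2) * (a * x + b * y)
        = a * (-(Real.log 2) * x) + b * (-(Real.log 2) * y) := by ring
    rw [hc, hΛ2, div_eq_mul_inv, div_eq_mul_inv, div_eq_mul_inv, hinv, hinv, hinv, harg]
    calc Real.log 2 * Real.exp (a * (-(Real.log 2) * x) + b * (-(Real.log 2) * y))
        < Real.log 2 * (a * Real.exp (-(Real.log 2) * x) + b * Real.exp (-(Real.log 2) * y)) :=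
          by exact mul_lt_mul_of_pos_left hexp hlog
      _ = a * (Real.log 2 * Real.exp (-(Real.log 2) * x))
          + b * (Real.log 2 * Real.exp (-(Real.log 2) * y)) := by ring
  calc (∑' n : ℕ, Λ n / (n : ℝ) ^ (a * x + b * y))
      < ∑' n : ℕ, (a * (Λ n / (n : ℝ) ^ x) + b * (Λ n / (n : ℝ) ^ y)) :=
        Summable.tsum_lt_tsum (i := (2 : ℕ)) (fun n => term_convex ha hb hab) hlt
          (summable_vm hmid) hg
    _ = a * (∑' n : ℕ, Λ n / (n : ℝ) ^ x) + b * (∑' n : ℕ, Λ n / (n : ℝ) ^ y) := by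
        rw [Summable.tsum_add (hsx.mul_left a) (hsy.mul_left b), tsum_mul_left, tsum_mul_left]
end

section
/- Let 0 < θ < π/2 and define g : ℝ → ℝ by g(u) = (cos(u·tan θ) − cos θ)·sec²θ for |u| < θ·cot θ and g(u) = 0 otherwise. Then ∫_{ℝ} g(u)² du = sec²θ · (θ·tan θ + 3θ·cot θ − 3); equivalently, the convolution square w = g ∗ g satisfies w(0) = sec²θ · (θ·tan θ + 3θ·cot θ − 3). -/
open MeasureTheory Real

/-! `g` vanishes outside `(-θ cot θ, θ cot θ)` and is even, so `w 0 = ∫ g²`, and on that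
interval `(cos (u tan θ) - cos θ)²` has the elementary antiderivative
`u / 2 + sin (uk) cos (uk) / (2k) - 2 cos θ sin (uk) / k + cos² θ · u` with `k = tan θ`.
Evaluated at `u = ±θ cot θ`, where `uk = ±θ`, this collapses by `sin² θ + cos² θ = 1`. -/

theorem integral_ite_abs_lt_eq_intervalIntegral (f : ℝ → ℝ) {a : ℝ} (ha : 0 ≤ a) :
    ∫ u, (if |u| < a then f u else 0) = ∫ u in -a..a, f u := by
  have hind : (fun u => if |u| < a then f u else 0) = Set.indicator (Set.Ioo (-a) a) f := by
    ext u
    simp only [Set.indicator_apply, Set.mem_Ioo, abs_lt]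
  rw [hind, integral_indicator measurableSet_Ioo, ← integral_Ioc_eq_integral_Ioo,
    intervalIntegral.integral_of_le (by linarith)]

theorem hasDerivAt_cos_mul_sub_sq_antideriv {k : ℝ} (hk : k ≠ 0) (c u : ℝ) :
    HasDerivAt
      (fun u => u / 2 + sin (u * k) * cos (u * k) / (2 * k) - 2 * c * (sin (u * k) / k) + c ^ 2 * u)
      ((cos (u * k) - c) ^ 2) u := by
  have hlin : HasDerivAt (fun u : ℝ => u * k) k u := by
    simpa using (hasDerivAt_id u).mul_const k
  have h := ((((hasDerivAt_id u).div_const 2).add ((hlin.sin.mul hlin.cos).div_const (2 * k))).sub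
    ((hlin.sin.div_const k).const_mul (2 * c))).add ((hasDerivAt_id u).const_mul (c ^ 2))
  refine h.congr_deriv ?_
  field_simp
  linear_combination -sin_sq_add_cos_sq (u * k)

theorem integral_cos_mul_sub_sq {k : ℝ} (hk : k ≠ 0) (c a : ℝ) :
    ∫ u in -a..a, (cos (u * k) - c) ^ 2 =
      (1 + 2 * c ^ 2) * a + (sin (a * k) * cos (a * k) - 4 * c * sin (a * k)) / k := by
  rw [intervalIntegral.integral_eq_sub_of_hasDerivAt
    (fun u _ => hasDerivAt_cos_mul_sub_sq_antideriv hk c u)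
    ((continuous_cos.comp (continuous_id.mul continuous_const)).sub continuous_const
      |>.pow 2 |>.intervalIntegrable _ _)]
  simp only [neg_mul, sin_neg, cos_neg]
  field_simp
  ring

/-- For `0 < θ < π/2`, with
`g(u) = (cos(u tan θ) − cos θ) sec²θ` for `|u| < θ cot θ` and `g(u) = 0` otherwise,
one has `∫ g(u)² du = sec²θ (θ tan θ + 3θ cot θ − 3)`; equivalently, the convolution
square `w = g ∗ g` satisfies `w(0) = sec²θ (θ tan θ + 3θ cot θ − 3)`. -/
theorem stmt_10 (θ : ℝ) (hθ₁ : 0 < θ) (hθ₂ : θ < Real.pi / 2)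
    (g w : ℝ → ℝ)
    (hg : ∀ u : ℝ, g u =
      if |u| < θ * Real.cot θ then
        (Real.cos (u * Real.tan θ) - Real.cos θ) * (1 / Real.cos θ ^ 2)
      else 0)
    (hw : ∀ u : ℝ, w u = ∫ v : ℝ, g v * g (u - v)) :
    (∫ u : ℝ, g u ^ 2) =
        (1 / Real.cos θ ^ 2) * (θ * Real.tan θ + 3 * θ * Real.cot θ - 3) ∧
    w 0 = (1 / Real.cos θ ^ 2) * (θ * Real.tan θ + 3 * θ * Real.cot θ - 3) := by
  have hc : 0 < cos θ := cos_pos_of_mem_Ioo ⟨by linarith [pi_pos], hθ₂⟩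
  have hs : 0 < sin θ := sin_pos_of_pos_of_lt_pi hθ₁ (by linarith [pi_pos])
  have hcot : θ * cot θ * tan θ = θ := by
    rw [cot_eq_cos_div_sin, tan_eq_sin_div_cos]
    field_simp
  have hsq : (fun u => g u ^ 2) = fun u =>
      if |u| < θ * cot θ then (cos (u * tan θ) - cos θ) ^ 2 * (1 / cos θ ^ 2) ^ 2 else 0 := by
    ext u
    rw [hg]
    split_ifs <;> ring
  have main : ∫ u, g u ^ 2 = 1 / cos θ ^ 2 * (θ * tan θ + 3 * θ * cot θ - 3) := by
    rw [hsq, integral_ite_abs_lt_eq_intervalIntegral _ (by rw [cot_eq_cos_div_sin]; positivity),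
      intervalIntegral.integral_mul_const, integral_cos_mul_sub_sq (tan_pos_of_pos_of_lt_pi_div_two hθ₁ hθ₂).ne',
      hcot, cot_eq_cos_div_sin, tan_eq_sin_div_cos]
    field_simp
    linear_combination (-θ) * sin_sq_add_cos_sq θ
  have hconv : w 0 = ∫ u, g u ^ 2 := by
    rw [hw]
    congr 1 with v
    rw [zero_sub, sq, hg, hg, abs_neg, neg_mul, cos_neg]
  exact ⟨main, hconv ▸ main⟩
end

section
/- Let 0 < θ < π/2, let g be as below and let w = g ∗ g. Then ∫_{0}^{∞} e^{v} · w(v) dv = 2·tan²θ + 3 − 3θ·(tan θ + cot θ). -/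
/-!
With `a = θ cot θ`, the convolution square `w` vanishes beyond `2a`, and on `[0, 2a]` it is
`cos⁻⁴ θ` times an explicit trigonometric polynomial in `u tan θ` with affine coefficients.
Hence `∫_0^∞ e^v w(v) dv` is computed from a primitive `e^u (P u cos (u tan θ) +
Q u sin (u tan θ) + R u)` with affine `P, Q, R`; because `a tan θ = θ`, its value at `u = 2a`
vanishes and only the boundary term at `0` survives.
-/

open MeasureTheory Real Set

theorem integral_mul_comp_sub_of_eq_ite {f₁ f₂ F₁ F₂ : ℝ → ℝ} {a u : ℝ} (hu : 0 ≤ u)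
    (hf₁ : ∀ v, f₁ v = if |v| < a then F₁ v else 0)
    (hf₂ : ∀ v, f₂ v = if |v| < a then F₂ v else 0) :
    ∫ v, f₁ v * f₂ (u - v) = ∫ v in Ioo (u - a) a, F₁ v * F₂ (u - v) := by
  rw [← integral_indicator measurableSet_Ioo]
  congr 1 with v
  simp only [hf₁, hf₂, indicator, mem_Ioo, abs_lt]
  split_ifs <;> first | rfl | (exfalso; grind) | simp

theorem integral_mul_comp_sub_eq_zero_of_eq_ite {f₁ f₂ F₁ F₂ : ℝ → ℝ} {a u : ℝ}
    (hu : 2 * a ≤ u) (hf₁ : ∀ v, f₁ v = if |v| < a then F₁ v else 0)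
    (hf₂ : ∀ v, f₂ v = if |v| < a then F₂ v else 0) :
    ∫ v, f₁ v * f₂ (u - v) = 0 := by
  rw [← integral_zero ℝ ℝ]
  congr 1 with v
  simp only [hf₁, hf₂, abs_lt]
  split_ifs <;> first | (exfalso; grind) | simp

noncomputable def truncCosConv (k a u : ℝ) : ℝ :=
  (2 * a - u) * (cos (u * k) / 2 + cos (a * k) ^ 2) + sin ((2 * a - u) * k) / (2 * k)
    - 2 * cos (a * k) * (sin (a * k) - sin ((u - a) * k)) / k

theorem integral_truncCos_mul_truncCos {k : ℝ} (hk : k ≠ 0) (a u : ℝ) :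
    ∫ v in u - a..a, (cos (v * k) - cos (a * k)) * (cos ((u - v) * k) - cos (a * k)) =
      truncCosConv k a u := by
  set C := cos (a * k)
  have hprimitive (v : ℝ) : HasDerivAt (fun v => v * cos (u * k) / 2
      + sin ((2 * v - u) * k) / (4 * k) - C * sin (v * k) / k + C * sin ((u - v) * k) / k
      + C ^ 2 * v) ((cos (v * k) - C) * (cos ((u - v) * k) - C)) v := by
    have h₁ := ((((hasDerivAt_id' v).const_mul 2).sub_const u).mul_const k).sin
    have h₂ := (((hasDerivAt_id' v).const_sub u).mul_const k).sin
    refine ((((((hasDerivAt_mul_const (cos (u * k))).div_const 2).add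
      (h₁.div_const (4 * k))).sub (((hasDerivAt_mul_const k).sin.const_mul C).div_const k)).add
      ((h₂.const_mul C).div_const k)).add ((hasDerivAt_id' v).const_mul (C ^ 2))).congr_deriv ?_
    have e₁ : u * k = v * k + (u - v) * k := by ring
    have e₂ : (2 * v - u) * k = v * k - (u - v) * k := by ring
    simp only [e₁, e₂, cos_add, cos_sub]
    field_simp
    ring
  rw [intervalIntegral.integral_eq_sub_of_hasDerivAt (fun v _ => hprimitive v)
    (Continuous.intervalIntegrable (by fun_prop) _ _)]
  have e : (2 * (u - a) - u) * k = -((2 * a - u) * k) := by ring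
  simp only [truncCosConv, C, e, sin_neg, sub_sub_cancel]
  field_simp
  ring

theorem integral_truncCos_conv {k a m u : ℝ} (hk : k ≠ 0) (hu₀ : 0 ≤ u) (hu : u ≤ 2 * a)
    {f : ℝ → ℝ} (hf : ∀ v, f v = if |v| < a then (cos (v * k) - cos (a * k)) * m else 0) :
    ∫ v, f v * f (u - v) = truncCosConv k a u * m ^ 2 := by
  rw [integral_mul_comp_sub_of_eq_ite hu₀ hf hf, ← integral_Ioc_eq_integral_Ioo,
    ← intervalIntegral.integral_of_le (by linarith)]
  simp_rw [mul_mul_mul_comm _ m, ← sq]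
  rw [intervalIntegral.integral_mul_const, integral_truncCos_mul_truncCos hk]

theorem hasDerivAt_exp_mul_affine_trig (k p₀ p₁ q₀ q₁ r₀ r₁ u : ℝ) :
    HasDerivAt (fun u => exp u * ((p₀ + p₁ * u) * cos (u * k) + (q₀ + q₁ * u) * sin (u * k)
        + (r₀ + r₁ * u)))
      (exp u * ((p₀ + p₁ + k * q₀ + (p₁ + k * q₁) * u) * cos (u * k)
        + (q₀ + q₁ - k * p₀ + (q₁ - k * p₁) * u) * sin (u * k) + (r₀ + r₁ + r₁ * u))) u := by
  have haffine (α β : ℝ) : HasDerivAt (fun u => α + β * u) β u := by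
    simpa using ((hasDerivAt_id' u).const_mul β).const_add α
  refine ((hasDerivAt_exp u).mul ((((haffine p₀ p₁).mul (hasDerivAt_mul_const k).cos).add
    ((haffine q₀ q₁).mul (hasDerivAt_mul_const k).sin)).add (haffine r₀ r₁))).congr_deriv ?_
  simp only [Pi.add_apply, Pi.mul_apply]
  ring

theorem truncCosConv_tan_eq {θ a : ℝ} (hs : sin θ ≠ 0) (ha : a * tan θ = θ) (u : ℝ) :
    truncCosConv (tan θ) a u = (a - u / 2 - cos θ ^ 2) * cos (u * tan θ)
      + (cos θ ^ 2 + 1 / 2) / tan θ * sin (u * tan θ) + (2 * a - u) * cos θ ^ 2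
      - 2 * cos θ ^ 2 := by
  have e₁ : (2 * a - u) * tan θ = 2 * θ - u * tan θ := by linear_combination 2 * ha
  have e₂ : (u - a) * tan θ = u * tan θ - θ := by linear_combination -ha
  rw [truncCosConv, ha, e₁, e₂, sin_sub, sin_sub, sin_two_mul, cos_two_mul, tan_eq_sin_div_cos]
  field_simp
  ring

theorem integral_exp_mul_truncCosConv {θ a : ℝ} (hs : sin θ ≠ 0) (hc : cos θ ≠ 0)
    (ha : a * tan θ = θ) :
    ∫ u in 0..2 * a, exp u * truncCosConv (tan θ) a u =
      cos θ ^ 4 * (2 * tan θ ^ 2 + 3 - 3 * θ * (tan θ + cot θ)) := by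
  have hpy := sin_sq_add_cos_sq θ
  have hprimitive (u : ℝ) := (hasDerivAt_exp_mul_affine_trig (tan θ)
    (cos θ ^ 2 * (a - cos θ ^ 2 - 1)) (-cos θ ^ 2 / 2)
    (cos θ ^ 3 * (cos θ ^ 2 + 1 / 2) / sin θ + a * cos θ * sin θ) (-(cos θ * sin θ) / 2)
    (cos θ ^ 2 * (2 * a - 1)) (-cos θ ^ 2) u).congr_deriv
    (show _ = exp u * truncCosConv (tan θ) a u by
      rw [truncCosConv_tan_eq hs ha]
      linear_combination (norm := skip) exp u * ((a - u / 2) * cos (u * tan θ)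
        + (cos θ ^ 2 + 1 / 2) / tan θ * sin (u * tan θ)) * hpy
      rw [tan_eq_sin_div_cos]
      field_simp
      ring)
  rw [intervalIntegral.integral_eq_sub_of_hasDerivAt (fun u _ => hprimitive u)
    (Continuous.intervalIntegrable (by unfold truncCosConv; fun_prop) _ _)]
  have h2a : 2 * a * tan θ = 2 * θ := by linear_combination 2 * ha
  have ha' : a = θ * (cos θ / sin θ) :=
    calc a = a * tan θ * (cos θ / sin θ) := by rw [tan_eq_sin_div_cos]; field_simp
      _ = θ * (cos θ / sin θ) := by rw [ha]
  simp only [h2a, zero_mul, cos_zero, sin_zero, exp_zero, cos_two_mul, sin_two_mul]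
  simp only [ha', tan_eq_sin_div_cos, cot_eq_cos_div_sin]
  linear_combination (norm := skip) cos θ ^ 2 * (3 * θ * cos θ - 2 * sin θ) / sin θ * hpy
  field_simp
  ring

/-- For `0 < θ < π/2`, with `g` the truncated-cosine mollifier and
`w = g ∗ g` its convolution square, `∫_0^∞ e^v w(v) dv = 2 tan²θ + 3 − 3θ(tan θ + cot θ)`. -/
theorem stmt_11 (θ : ℝ) (hθ₁ : 0 < θ) (hθ₂ : θ < Real.pi / 2)
    (g w : ℝ → ℝ)
    (hg : ∀ u : ℝ, g u =
      if |u| < θ * Real.cot θ then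
        (Real.cos (u * Real.tan θ) - Real.cos θ) * (1 / Real.cos θ ^ 2)
      else 0)
    (hw : ∀ u : ℝ, w u = ∫ v : ℝ, g v * g (u - v)) :
    ∫ v in Set.Ioi (0 : ℝ), Real.exp v * w v =
      2 * Real.tan θ ^ 2 + 3 - 3 * θ * (Real.tan θ + Real.cot θ) := by
  have hc : 0 < cos θ := cos_pos_of_mem_Ioo ⟨by linarith, hθ₂⟩
  have hs : 0 < sin θ := sin_pos_of_pos_of_lt_pi hθ₁ (by linarith)
  have hk : tan θ ≠ 0 := (tan_pos_of_pos_of_lt_pi_div_two hθ₁ hθ₂).ne'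
  set a := θ * cot θ
  have ha₀ : 0 < a := mul_pos hθ₁ (by rw [cot_eq_cos_div_sin]; positivity)
  have ha : a * tan θ = θ := by
    simp only [a, tan_eq_sin_div_cos, cot_eq_cos_div_sin]
    field_simp
  have hg' (v : ℝ) :
      g v = if |v| < a then (cos (v * tan θ) - cos (a * tan θ)) * (1 / cos θ ^ 2) else 0 := by
    rw [hg, ha]
  calc ∫ v in Ioi 0, exp v * w v = ∫ v in 0..2 * a, exp v * w v := by
        rw [intervalIntegral.integral_of_le (by linarith)]
        refine setIntegral_eq_of_subset_of_forall_sdiff_eq_zero measurableSet_Ioi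
          Ioc_subset_Ioi_self fun v hv => ?_
        have hv₂ : 2 * a ≤ v := by grind
        rw [hw, integral_mul_comp_sub_eq_zero_of_eq_ite hv₂ hg' hg', mul_zero]
    _ = ∫ v in 0..2 * a, exp v * truncCosConv (tan θ) a v * (1 / cos θ ^ 2) ^ 2 := by
        refine intervalIntegral.integral_congr fun v hv => ?_
        rw [uIcc_of_le (by linarith)] at hv
        rw [hw, integral_truncCos_conv hk hv.1 hv.2 hg', mul_assoc]
    _ = 2 * tan θ ^ 2 + 3 - 3 * θ * (tan θ + cot θ) := by
        rw [intervalIntegral.integral_mul_const, integral_exp_mul_truncCosConv hs.ne' hc.ne' ha]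
        field_simp
end

section
/- Let 0 < θ < π/2, let g be as below and let w = g ∗ g. Then ∫_{0}^{∞} v · w(v) dv = (1/3) · csc θ · ( (15 − 12θ² + θ·(4θ² − 15)·cot θ) · csc θ + 3θ·sec θ ). -/
/-!
With `c = tan θ`, `g` is `sec² θ` times `u ↦ b (c u)`, where `b u = cos u - cos θ` on
`(-θ, θ)` (because `c · θ cot θ = θ`). Rescaling multiplies the first moment of the
autoconvolution by `sec⁴ θ / c³`, so it suffices to treat `b`. For `0 ≤ v`, `(b ∗ b) v` is the
integral of `(cos x - cos θ) (cos (v - x) - cos θ)` over `(v - θ, θ)`: it vanishes for `v ≥ 2θ`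
and is elementary (product-to-sum) for `v ≤ 2θ`, and then so is `∫₀^{2θ} v (b ∗ b) v dv`.
-/

open MeasureTheory Real Set
open scoped Convolution

lemma convolution_const_mul_comp_mul_left (f g : ℝ → ℝ) (a b c v : ℝ) :
    ((fun u => a * f (c * u)) ⋆ fun u => b * g (c * u)) v =
      a * b * |c⁻¹| * (f ⋆ g) (c * v) := by
  have h : ∀ t, a * f (c * t) * (b * g (c * (v - t))) =
      a * b * (fun y => f y * g (c * v - y)) (c * t) := fun t => by rw [mul_sub]; ring
  simp only [convolution_def, ContinuousLinearMap.lsmul_apply, smul_eq_mul]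
  rw [integral_congr_ae (.of_forall h), integral_const_mul,
    Measure.integral_comp_mul_left (fun y => f y * g (c * v - y)) c, smul_eq_mul, mul_assoc (a * b)]

lemma integral_Ioi_mul_comp_mul_left (f : ℝ → ℝ) {c : ℝ} (hc : 0 < c) :
    ∫ v in Ioi 0, v * f (c * v) = (c ^ 2)⁻¹ * ∫ u in Ioi 0, u * f u := by
  have h : ∀ v, v * f (c * v) = c⁻¹ * (fun u => u * f u) (c * v) := fun v => by field_simp
  rw [integral_congr_ae (.of_forall h), integral_const_mul,
    integral_comp_mul_left_Ioi (fun u => u * f u) 0 hc, mul_zero, smul_eq_mul, ← mul_assoc, sq,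
    mul_inv]

noncomputable def cosBump (r u : ℝ) : ℝ := if |u| < r then cos u - cos r else 0

lemma cosBump_mul_cosBump_sub {r v : ℝ} (hv : 0 ≤ v) (x : ℝ) :
    cosBump r x * cosBump r (v - x) =
      (Ioo (v - r) r).indicator (fun x => (cos x - cos r) * (cos (v - x) - cos r)) x := by
  by_cases hx : x ∈ Ioo (v - r) r
  · have hx₁ : |x| < r := abs_lt.2 ⟨by linarith [hx.1], hx.2⟩
    have hx₂ : |v - x| < r := abs_lt.2 ⟨by linarith [hx.2], by linarith [hx.1]⟩
    simp [cosBump, hx₁, hx₂, hx]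
  · rw [indicator_of_notMem hx]
    rcases not_and_or.1 hx with hx | hx
    · have : ¬ |v - x| < r := fun h => hx (by linarith [(abs_lt.1 h).2])
      simp [cosBump, this]
    · have : ¬ |x| < r := fun h => hx (abs_lt.1 h).2
      simp [cosBump, this]

lemma cosBump_conv_cosBump {r v : ℝ} (hv : 0 ≤ v) :
    (cosBump r ⋆ cosBump r) v =
      ∫ x in Ioo (v - r) r, (cos x - cos r) * (cos (v - x) - cos r) := by
  simp only [convolution_def, ContinuousLinearMap.lsmul_apply, smul_eq_mul,
    cosBump_mul_cosBump_sub hv]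
  exact integral_indicator measurableSet_Ioo

lemma cosBump_conv_cosBump_of_two_mul_le {r v : ℝ} (hr : 0 ≤ r) (hv : 2 * r ≤ v) :
    (cosBump r ⋆ cosBump r) v = 0 := by
  rw [cosBump_conv_cosBump (by linarith), Ioo_eq_empty (by linarith), Measure.restrict_empty,
    integral_zero_measure]

lemma hasDerivAt_cosBump_conv_primitive (r v x : ℝ) :
    HasDerivAt (fun x => (cos v / 2 + cos r ^ 2) * x + sin (2 * x - v) / 4 - cos r * sin x
      + cos r * sin (v - x)) ((cos x - cos r) * (cos (v - x) - cos r)) x := by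
  have h := (((((hasDerivAt_id x).const_mul (cos v / 2 + cos r ^ 2)).add
    ((((hasDerivAt_id x).const_mul 2).sub_const v).sin.div_const 4)).sub
    ((hasDerivAt_sin x).const_mul (cos r))).add
    (((hasDerivAt_id x).const_sub v).sin.const_mul (cos r)))
  refine h.congr_deriv ?_
  have h₁ := cos_add x (v - x)
  have h₂ := cos_sub x (v - x)
  rw [add_sub_cancel] at h₁
  rw [show x - (v - x) = 2 * x - v by ring] at h₂
  simp only [id_eq]
  linear_combination (h₁ + h₂) / 2

lemma cosBump_conv_cosBump_of_le {r v : ℝ} (hv₀ : 0 ≤ v) (hv : v ≤ 2 * r) :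
    (cosBump r ⋆ cosBump r) v =
      (2 * r - v) * (cos v / 2 + cos r ^ 2) + sin (2 * r - v) / 2
        + 2 * cos r * (sin (v - r) - sin r) := by
  rw [cosBump_conv_cosBump hv₀, ← integral_Ioc_eq_integral_Ioo,
    ← intervalIntegral.integral_of_le (by linarith),
    intervalIntegral.integral_eq_sub_of_hasDerivAt
      (fun x _ => hasDerivAt_cosBump_conv_primitive r v x)
      ((by fun_prop : Continuous _).intervalIntegrable _ _)]
  rw [show 2 * (v - r) - v = -(2 * r - v) by ring, sub_sub_cancel, sin_neg]
  ring

lemma hasDerivAt_mul_cosBump_conv_primitive (r v : ℝ) :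
    HasDerivAt (fun v => r * (v * sin v + cos v) - (v ^ 2 * sin v + 2 * v * cos v - 2 * sin v) / 2
      + cos r ^ 2 * (r * v ^ 2 - v ^ 3 / 3) + (v * cos (2 * r - v) + sin (2 * r - v)) / 2
      + 2 * cos r * (sin (v - r) - v * cos (v - r)) - cos r * sin r * v ^ 2)
      (v * ((2 * r - v) * (cos v / 2 + cos r ^ 2) + sin (2 * r - v) / 2
        + 2 * cos r * (sin (v - r) - sin r))) v := by
  have hid := hasDerivAt_id v
  have hsq := hasDerivAt_pow 2 v
  have hcube := hasDerivAt_pow 3 v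
  have hrefl := hid.const_sub (2 * r)
  have hshift := hid.sub_const r
  have h := (((((((hid.mul (hasDerivAt_sin v)).add (hasDerivAt_cos v)).const_mul r).sub
    ((((hsq.mul (hasDerivAt_sin v)).add ((hid.const_mul 2).mul (hasDerivAt_cos v))).sub
      ((hasDerivAt_sin v).const_mul 2)).div_const 2)).add
    (((hsq.const_mul r).sub (hcube.div_const 3)).const_mul (cos r ^ 2))).add
    (((hid.mul hrefl.cos).add hrefl.sin).div_const 2)).add
    ((hshift.sin.sub (hid.mul hshift.cos)).const_mul (2 * cos r))).sub
    (hsq.const_mul (cos r * sin r))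
  refine h.congr_deriv ?_
  simp only [id_eq]
  ring

theorem integral_Ioi_mul_cosBump_conv_cosBump {r : ℝ} (hr : 0 ≤ r) :
    ∫ v in Ioi 0, v * (cosBump r ⋆ cosBump r) v =
      r - 6 * r * cos r ^ 2 + 5 * sin r * cos r + 4 / 3 * r ^ 3 * cos r ^ 2
        - 4 * r ^ 2 * sin r * cos r := by
  have hvanish : ∀ v ∈ Ioi 0 \ Ioc 0 (2 * r), v * (cosBump r ⋆ cosBump r) v = 0 := by
    rintro v ⟨hv₀, hv⟩
    rw [cosBump_conv_cosBump_of_two_mul_le hr (not_le.1 (not_and.1 hv hv₀)).le, mul_zero]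
  have hformula : EqOn (fun v => v * (cosBump r ⋆ cosBump r) v) (fun v => v * ((2 * r - v) *
      (cos v / 2 + cos r ^ 2) + sin (2 * r - v) / 2 + 2 * cos r * (sin (v - r) - sin r)))
      (uIcc 0 (2 * r)) := by
    intro v hv
    rw [uIcc_of_le (by linarith)] at hv
    simp only [cosBump_conv_cosBump_of_le hv.1 hv.2]
  rw [setIntegral_eq_of_subset_of_forall_sdiff_eq_zero measurableSet_Ioi Ioc_subset_Ioi_self
      hvanish,
    ← intervalIntegral.integral_of_le (by linarith), intervalIntegral.integral_congr hformula,
    intervalIntegral.integral_eq_sub_of_hasDerivAt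
      (fun v _ => hasDerivAt_mul_cosBump_conv_primitive r v)
      ((by fun_prop : Continuous _).intervalIntegrable _ _)]
  simp only [sub_self, sub_zero, zero_sub, show 2 * r - r = r by ring, sin_neg, cos_neg, sin_zero,
    cos_zero, sin_two_mul, cos_two_mul]
  ring

/-- For `0 < θ < π/2`, with `g` the truncated-cosine mollifier and
`w = g ∗ g` its convolution square,
`∫_0^∞ v w(v) dv = (1/3) csc θ ((15 − 12θ² + θ(4θ² − 15) cot θ) csc θ + 3θ sec θ)`. -/
theorem stmt_12 (θ : ℝ) (hθ₁ : 0 < θ) (hθ₂ : θ < Real.pi / 2)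
    (g w : ℝ → ℝ)
    (hg : ∀ u : ℝ, g u =
      if |u| < θ * Real.cot θ then
        (Real.cos (u * Real.tan θ) - Real.cos θ) * (1 / Real.cos θ ^ 2)
      else 0)
    (hw : ∀ u : ℝ, w u = ∫ v : ℝ, g v * g (u - v)) :
    ∫ v in Set.Ioi (0 : ℝ), v * w v =
      (1 / 3) * (1 / Real.sin θ) *
        ((15 - 12 * θ ^ 2 + θ * (4 * θ ^ 2 - 15) * Real.cot θ) * (1 / Real.sin θ) +
          3 * θ * (1 / Real.cos θ)) := by
  have hcos : 0 < cos θ := cos_pos_of_mem_Ioo ⟨by linarith [pi_pos], hθ₂⟩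
  have hsin : 0 < sin θ := sin_pos_of_pos_of_lt_pi hθ₁ (by linarith [pi_pos])
  have htan : 0 < tan θ := tan_pos_of_pos_of_lt_pi_div_two hθ₁ hθ₂
  have hg' : g = fun u => 1 / cos θ ^ 2 * cosBump θ (tan θ * u) := by
    funext u
    have hsupp : |u| < θ * cot θ ↔ |tan θ * u| < θ := by
      rw [abs_mul, abs_of_pos htan, ← lt_div_iff₀' htan, tan_eq_sin_div_cos, cot_eq_cos_div_sin,
        div_div_eq_mul_div, mul_div_assoc]
    rw [hg, cosBump, mul_comm u]
    simp only [hsupp]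
    split_ifs <;> ring
  have hw' : w = g ⋆ g := funext fun u => by simp [hw, convolution_def]
  calc ∫ v in Ioi 0, v * w v
      = (1 / cos θ ^ 2) ^ 2 * |(tan θ)⁻¹| *
          ∫ v in Ioi 0, v * (cosBump θ ⋆ cosBump θ) (tan θ * v) := by
        rw [← integral_const_mul]
        congr 1 with v
        rw [hw', hg', convolution_const_mul_comp_mul_left]
        ring
    _ = (1 / cos θ ^ 2) ^ 2 * |(tan θ)⁻¹| * ((tan θ ^ 2)⁻¹ *
          (θ - 6 * θ * cos θ ^ 2 + 5 * sin θ * cos θ + 4 / 3 * θ ^ 3 * cos θ ^ 2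
            - 4 * θ ^ 2 * sin θ * cos θ)) := by
        rw [integral_Ioi_mul_comp_mul_left _ htan, integral_Ioi_mul_cosBump_conv_cosBump hθ₁.le]
    _ = _ := by
        rw [abs_of_pos (inv_pos.2 htan), tan_eq_sin_div_cos, cot_eq_cos_div_sin]
        field_simp
        linear_combination (-3 * θ) * sin_sq_add_cos_sq θ
end

section
/- There exist positive real numbers b_0, b_1, b_2, b_3, b_4, b_5 such that for every real ϑ, (1 + cos ϑ)·(0.8652559 + cos ϑ)²·(0.1974476 + cos ϑ)² = Σ_{j=0}^{5} b_j · cos(jϑ). In particular, this degree-5 cosine polynomial is nonnegative for all real ϑ and has all its coefficients positive. -/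
lemma cos4 (θ : ℝ) : Real.cos (4 * θ) =
    8 * Real.cos θ ^ 4 - 8 * Real.cos θ ^ 2 + 1 := by
  have h : (4 : ℝ) * θ = 2 * (2 * θ) := by ring
  rw [h, Real.cos_two_mul, Real.cos_two_mul]; ring

lemma cos5 (θ : ℝ) : Real.cos (5 * θ) =
    16 * Real.cos θ ^ 5 - 20 * Real.cos θ ^ 3 + 5 * Real.cos θ := by
  have h : (5 : ℝ) * θ = 2 * θ + 3 * θ := by ring
  rw [h, Real.cos_add, Real.cos_two_mul, Real.cos_three_mul, Real.sin_two_mul,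
    Real.sin_three_mul]
  linear_combination (8 * Real.cos θ * Real.sin θ ^ 2 + 2 * Real.cos θ -
    8 * Real.cos θ ^ 3) * Real.sin_sq_add_cos_sq θ

/-- There exist positive reals `b_0, …, b_5` such that for every real
`ϑ`, `(1 + cos ϑ)(0.8652559 + cos ϑ)²(0.1974476 + cos ϑ)² = Σ_{j=0}^5 b_j cos(jϑ)`.
In particular this degree-5 cosine polynomial is nonnegative with positive coefficients. -/
theorem stmt_13 :
    ∃ b : Fin 6 → ℝ, (∀ j, 0 < b j) ∧
      (∀ ϑ : ℝ,
        (1 + Real.cos ϑ) * (0.8652559 + Real.cos ϑ) ^ 2 *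
            (0.1974476 + Real.cos ϑ) ^ 2 =
          ∑ j : Fin 6, b j * Real.cos ((j : ℕ) * ϑ)) ∧
      (∀ ϑ : ℝ, 0 ≤ ∑ j : Fin 6, b j * Real.cos ((j : ℕ) * ϑ)) := by
  refine ⟨![2.1182820548605713633830119056, 3.7146208486420674743230119056,
      2.47977070142997861094, 1.2116077826484825, 0.390675875, 0.0625], ?_, ?_⟩
  · intro j; fin_cases j <;> norm_num
  have key : ∀ ϑ : ℝ,
      (1 + Real.cos ϑ) * (0.8652559 + Real.cos ϑ) ^ 2 *
          (0.1974476 + Real.cos ϑ) ^ 2 =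
        ∑ j : Fin 6, (![2.1182820548605713633830119056, 3.7146208486420674743230119056,
          2.47977070142997861094, 1.2116077826484825, 0.390675875, 0.0625] : Fin 6 → ℝ) j *
          Real.cos ((j : ℕ) * ϑ) := by
    intro ϑ
    rw [Fin.sum_univ_six]
    simp only [show ((0:Fin 6):ℕ) = 0 from rfl, show ((1:Fin 6):ℕ) = 1 from rfl,
      show ((2:Fin 6):ℕ) = 2 from rfl, show ((3:Fin 6):ℕ) = 3 from rfl,
      show ((4:Fin 6):ℕ) = 4 from rfl, show ((5:Fin 6):ℕ) = 5 from rfl,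
      Nat.cast_ofNat, Nat.cast_zero, Nat.cast_one, zero_mul, one_mul, Real.cos_zero]
    rw [Real.cos_two_mul, Real.cos_three_mul, cos4, cos5]
    show _ = (2.1182820548605713633830119056:ℝ) * 1 +
      3.7146208486420674743230119056 * Real.cos ϑ +
      2.47977070142997861094 * (2 * Real.cos ϑ ^ 2 - 1) +
      1.2116077826484825 * (4 * Real.cos ϑ ^ 3 - 3 * Real.cos ϑ) +
      0.390675875 * (8 * Real.cos ϑ ^ 4 - 8 * Real.cos ϑ ^ 2 + 1) +
      0.0625 * (16 * Real.cos ϑ ^ 5 - 20 * Real.cos ϑ ^ 3 + 5 * Real.cos ϑ)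
    norm_num
    ring
  refine ⟨key, fun ϑ => ?_⟩
  rw [← key ϑ]
  have h1 : 0 ≤ 1 + Real.cos ϑ := by nlinarith [Real.neg_one_le_cos ϑ]
  positivity
end

section
/- For every real number r with 1 < r < 3, there exists a unique θ with 0 < θ < π/2 satisfying sin²θ = r·(1 − θ·cot θ). -/
/-!
Clearing denominators, the equation says `r = ρ θ` with `ρ θ = sin³θ / (sin θ - θ cos θ)`.
The derivative of `ρ` has the sign of `3 sin θ cos θ - θ (1 + 2 cos²θ)`, which is negative
because `3 sin u < u (2 + cos u)` for `u > 0` (take `u = 2θ`). So `ρ` is strictly decreasing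
on `(0, π)` and the solution is unique. Existence follows from the intermediate value theorem,
since `ρ (π/2) = 1` while `ρ θ → 3` as `θ → 0⁺`.
-/

open Real Set

noncomputable def sinCubeQuot (θ : ℝ) : ℝ := sin θ ^ 3 / (sin θ - θ * cos θ)

lemma sin_sub_mul_cos_pos {u : ℝ} (h₀ : 0 < u) (hπ : u < π) : 0 < sin u - u * cos u := by
  rcases lt_or_ge u (π / 2) with h | h
  · have hc : 0 < cos u := cos_pos_of_mem_Ioo ⟨by linarith [pi_pos], h⟩
    have ht : u < tan u := lt_tan h₀ h
    rw [tan_eq_sin_div_cos, lt_div_iff₀ hc] at ht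
    linarith
  · have hc : cos u ≤ 0 := cos_nonpos_of_pi_div_two_le_of_le h (by linarith)
    have hs : 0 < sin u := sin_pos_of_pos_of_lt_pi h₀ hπ
    nlinarith

lemma two_sub_two_mul_cos_sub_mul_sin_pos {u : ℝ} (h₀ : 0 < u) (hπ : u ≤ π) :
    0 < 2 - 2 * cos u - u * sin u := by
  have hderiv (x : ℝ) : HasDerivAt (fun y => 2 - 2 * cos y - y * sin y) (sin x - x * cos x) x := by
    have h := (((hasDerivAt_cos x).const_mul 2).const_sub 2).sub
      ((hasDerivAt_id' x).mul (hasDerivAt_sin x))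
    exact h.congr_deriv (by ring)
  have hmono : StrictMonoOn (fun y => 2 - 2 * cos y - y * sin y) (Icc 0 π) := by
    refine strictMonoOn_of_deriv_pos (convex_Icc _ _) (by fun_prop) fun x hx => ?_
    rw [interior_Icc] at hx
    rw [(hderiv x).deriv]
    exact sin_sub_mul_cos_pos hx.1 hx.2
  simpa using hmono (left_mem_Icc.mpr pi_pos.le) ⟨h₀.le, hπ⟩ h₀

lemma three_mul_sin_lt_mul_two_add_cos {u : ℝ} (h₀ : 0 < u) : 3 * sin u < u * (2 + cos u) := by
  rcases lt_or_ge u π with hπ | hπ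
  · have hderiv (x : ℝ) : HasDerivAt (fun y => y * (2 + cos y) - 3 * sin y)
        (2 - 2 * cos x - x * sin x) x := by
      have h := ((hasDerivAt_id' x).mul ((hasDerivAt_cos x).const_add 2)).sub
        ((hasDerivAt_sin x).const_mul 3)
      exact h.congr_deriv (by ring)
    have hmono : StrictMonoOn (fun y => y * (2 + cos y) - 3 * sin y) (Icc 0 π) := by
      refine strictMonoOn_of_deriv_pos (convex_Icc _ _) (by fun_prop) fun x hx => ?_
      rw [interior_Icc] at hx
      rw [(hderiv x).deriv]
      exact two_sub_two_mul_cos_sub_mul_sin_pos hx.1 hx.2.le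
    have h := hmono (left_mem_Icc.mpr pi_pos.le) ⟨h₀.le, hπ.le⟩ h₀
    simp only [cos_zero, sin_zero] at h
    linarith
  · nlinarith [sin_le_one u, neg_one_le_cos u, pi_gt_three]

lemma three_mul_sin_mul_cos_lt {θ : ℝ} (h₀ : 0 < θ) :
    3 * sin θ * cos θ < θ * (1 + 2 * cos θ ^ 2) := by
  have h := three_mul_sin_lt_mul_two_add_cos (mul_pos two_pos h₀)
  rw [sin_two_mul, cos_two_mul] at h
  linarith

lemma hasDerivAt_sinCubeQuot {θ : ℝ} (h₀ : 0 < θ) (hπ : θ < π) :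
    HasDerivAt sinCubeQuot
      (sin θ ^ 2 * (3 * sin θ * cos θ - θ * (1 + 2 * cos θ ^ 2)) /
        (sin θ - θ * cos θ) ^ 2) θ := by
  have hnum : HasDerivAt (fun x => sin x ^ 3) (3 * sin θ ^ 2 * cos θ) θ :=
    ((hasDerivAt_sin θ).fun_pow 3).congr_deriv (by norm_num)
  have hden : HasDerivAt (fun x => sin x - x * cos x) (θ * sin θ) θ :=
    ((hasDerivAt_sin θ).sub ((hasDerivAt_id' θ).mul (hasDerivAt_cos θ))).congr_deriv (by ring)
  refine (hnum.div hden (sin_sub_mul_cos_pos h₀ hπ).ne').congr_deriv ?_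
  congr 1
  linear_combination (-(θ * sin θ ^ 2)) * sin_sq_add_cos_sq θ

lemma strictAntiOn_sinCubeQuot : StrictAntiOn sinCubeQuot (Ioo 0 π) := by
  refine strictAntiOn_of_deriv_neg (convex_Ioo 0 π)
    (fun θ hθ => (hasDerivAt_sinCubeQuot hθ.1 hθ.2).continuousAt.continuousWithinAt)
    fun θ hθ => ?_
  rw [interior_Ioo] at hθ
  rw [(hasDerivAt_sinCubeQuot hθ.1 hθ.2).deriv]
  have hs : 0 < sin θ := sin_pos_of_pos_of_lt_pi hθ.1 hθ.2
  have hD : 0 < sin θ - θ * cos θ := sin_sub_mul_cos_pos hθ.1 hθ.2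
  exact div_neg_of_neg_of_pos
    (mul_neg_of_pos_of_neg (by positivity) (sub_neg.mpr (three_mul_sin_mul_cos_lt hθ.1)))
    (by positivity)

lemma sinCubeQuot_pi_div_two : sinCubeQuot (π / 2) = 1 := by
  simp [sinCubeQuot]

lemma mul_lt_three_mul_sin_mul_cos {r θ : ℝ} (h₀ : 0 < θ) (hθ : 2 * θ ^ 2 ≤ 3 - r) :
    r * θ < 3 * sin θ * cos θ := by
  have h := sin_gt_sub_cube (mul_pos two_pos h₀)
  rw [sin_two_mul] at h
  nlinarith

lemma lt_sinCubeQuot_of_two_mul_sq_le {r a : ℝ} (h₀ : 0 < a) (hπ : a < π)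
    (ha : 2 * a ^ 2 ≤ 3 - r) : r < sinCubeQuot a := by
  set g : ℝ → ℝ := fun x => sin x ^ 3 - r * (sin x - x * cos x)
  have hderiv (x : ℝ) : HasDerivAt g (sin x * (3 * sin x * cos x - r * x)) x := by
    have h := ((hasDerivAt_sin x).pow 3).sub
      (((hasDerivAt_sin x).sub ((hasDerivAt_id' x).mul (hasDerivAt_cos x))).const_mul r)
    exact h.congr_deriv (by ring)
  have hmono : StrictMonoOn g (Icc 0 a) := by
    refine strictMonoOn_of_deriv_pos (convex_Icc _ _) (by fun_prop) fun x hx => ?_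
    rw [interior_Icc] at hx
    rw [(hderiv x).deriv]
    refine mul_pos (sin_pos_of_pos_of_lt_pi hx.1 (by linarith [hx.2])) (sub_pos.mpr ?_)
    exact mul_lt_three_mul_sin_mul_cos hx.1 (by nlinarith [hx.1, hx.2])
  have hg : g 0 < g a := hmono (left_mem_Icc.mpr h₀.le) (right_mem_Icc.mpr h₀.le) h₀
  simp only [g, sin_zero, zero_mul, sub_zero, ne_eq, OfNat.ofNat_ne_zero, not_false_eq_true,
    zero_pow, mul_zero] at hg
  rw [sinCubeQuot, lt_div_iff₀ (sin_sub_mul_cos_pos h₀ hπ)]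
  linarith

lemma sin_sq_eq_mul_one_sub_mul_cot_iff {r θ : ℝ} (h₀ : 0 < θ) (hπ : θ < π) :
    sin θ ^ 2 = r * (1 - θ * cot θ) ↔ sinCubeQuot θ = r := by
  have hs : sin θ ≠ 0 := (sin_pos_of_pos_of_lt_pi h₀ hπ).ne'
  have hD : sin θ - θ * cos θ ≠ 0 := (sin_sub_mul_cos_pos h₀ hπ).ne'
  rw [cot_eq_cos_div_sin, sinCubeQuot, div_eq_iff hD]
  field_simp

/-- For every real `r` with `1 < r < 3`, there is a unique `θ` with
`0 < θ < π/2` satisfying `sin²θ = r (1 − θ cot θ)`. -/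
theorem stmt_14 (r : ℝ) (hr₁ : 1 < r) (hr₂ : r < 3) :
    ∃! θ : ℝ, (0 < θ ∧ θ < Real.pi / 2) ∧
      Real.sin θ ^ 2 = r * (1 - θ * Real.cot θ) := by
  set a := √((3 - r) / 2)
  have ha₀ : 0 < a := sqrt_pos.mpr (by linarith)
  have haπ : a < π / 2 := by linarith [(sqrt_lt' one_pos).mpr (by linarith : (3 - r) / 2 < 1 ^ 2),
    pi_gt_three]
  have hra : r < sinCubeQuot a :=
    lt_sinCubeQuot_of_two_mul_sq_le ha₀ (by linarith) (by rw [sq_sqrt (by linarith)]; linarith)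
  have hsub : Icc a (π / 2) ⊆ Ioo 0 π := fun θ hθ => ⟨ha₀.trans_le hθ.1, by linarith [hθ.2, pi_pos]⟩
  have hcont : ContinuousOn sinCubeQuot (Icc a (π / 2)) := fun θ hθ =>
    (hasDerivAt_sinCubeQuot (hsub hθ).1 (hsub hθ).2).continuousAt.continuousWithinAt
  obtain ⟨c, hc, hρc⟩ := intermediate_value_Ioo' haπ.le hcont
    ⟨sinCubeQuot_pi_div_two ▸ hr₁, hra⟩
  have hc₀ : 0 < c := ha₀.trans hc.1
  have hcπ : c < π := by linarith [hc.2, pi_pos]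
  refine ⟨c, ⟨⟨hc₀, hc.2⟩, (sin_sq_eq_mul_one_sub_mul_cot_iff hc₀ hcπ).mpr hρc⟩, ?_⟩
  rintro θ ⟨⟨hθ₀, hθ⟩, hθr⟩
  have hθπ : θ < π := by linarith [pi_pos]
  exact strictAntiOn_sinCubeQuot.injOn ⟨hθ₀, hθπ⟩ ⟨hc₀, hcπ⟩
    (((sin_sq_eq_mul_one_sub_mul_cot_iff hθ₀ hθπ).mp hθr).trans hρc.symm)
end
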